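/- Let π denote the real number pi. Let v₀ > 0 and let B, m : (0, v₀] → ℝ, with B continuous, B(v) > 0 for all v ∈ (0, v₀], B(v) → 0 as v → 0⁺, and m continuous. Assume that 1 − (16π)^{1/2} B(v)^{−1/2} m(v) ≥ 0 for all v ∈ (0, v₀], that the function v ↦ (1 − (16π)^{1/2} B(v)^{−1/2} m(v))^{1/2} is integrable on (0, v₀), and that B is differentiable at every v ∈ (0, v₀) with B'(v) ≤ B(v)^{−1/2} (16π − (16π)^{3/2} B(v)^{−1/2} m(v))^{1/2}. If in addition m(v) ≥ 0 for all v ∈ (0, v₀], then B(v₀) ≤ (36π)^{1/3} v₀^{2/3}. -/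

import Mathlib

open Set MeasureTheory Real Filter

/-!
With `m ≥ 0` the right-hand side of the differential inequality is at most `(16π)^{1/2} B^{-1/2}`,
so `(B^{3/2})' ≤ (3/2)(16π)^{1/2} = 6√π`. Since `B → 0` at `0⁺`, integrating gives
`B(v₀)^{3/2} ≤ 6√π v₀`, which is the claimed bound raised to the power `3/2`.
-/

theorem sub_le_mul_sub_of_deriv_le_of_tendsto {f : ℝ → ℝ} {a b C L : ℝ} (hab : a < b)
    (hf : ContinuousOn f (Ioc a b)) (hf' : DifferentiableOn ℝ f (Ioo a b))
    (le_hf' : ∀ x ∈ Ioo a b, deriv f x ≤ C) (hL : Tendsto f (nhdsWithin a (Ioi a)) (nhds L)) :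
    f b - L ≤ C * (b - a) := by
  have hint : interior (Ioc a b) = Ioo a b := interior_Ioc
  have hmvt : ∀ x ∈ Ioc a b, f b - f x ≤ C * (b - x) := fun x hx =>
    (convex_Ioc a b).image_sub_le_mul_sub_of_deriv_le hf (hint ▸ hf') (hint ▸ le_hf')
      x hx b (right_mem_Ioc.2 hab) hx.2
  have hlim : Tendsto (fun x => f b - f x - C * (b - x)) (nhdsWithin a (Ioi a))
      (nhds (f b - L - C * (b - a))) :=
    (tendsto_const_nhds.sub hL).sub
      (tendsto_const_nhds.mul (tendsto_const_nhds.sub (tendsto_id.mono_left nhdsWithin_le_nhds)))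
  have hle := le_of_tendsto hlim <| eventually_of_mem (Ioc_mem_nhdsGT hab) fun x hx =>
    sub_nonpos.2 (hmvt x hx)
  linarith

-- No sign condition: at exponent `1/2`, `Real.rpow` sends a negative base to `0`, like `√`.
theorem rpow_one_half_le_rpow_one_half {x y : ℝ} (h : x ≤ y) :
    x ^ ((1 : ℝ) / 2) ≤ y ^ ((1 : ℝ) / 2) := by
  rw [← sqrt_eq_rpow, ← sqrt_eq_rpow]
  exact sqrt_le_sqrt h

theorem deriv_rpow_three_halves_le {B : ℝ → ℝ} {x K : ℝ} (hBx : 0 < B x)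
    (hd : DifferentiableAt ℝ B x) (h : deriv B x ≤ B x ^ (-(1 : ℝ) / 2) * K) :
    deriv (fun y => B y ^ ((3 : ℝ) / 2)) x ≤ 3 / 2 * K := by
  rw [(hd.hasDerivAt.rpow_const (Or.inr (by norm_num))).deriv]
  have hcancel : B x ^ ((3 : ℝ) / 2 - 1) * B x ^ (-(1 : ℝ) / 2) = 1 := by
    rw [← rpow_add hBx]; norm_num
  have hscaled := mul_le_mul_of_nonneg_left h (rpow_nonneg hBx.le ((3 : ℝ) / 2 - 1))
  rw [← mul_assoc, hcancel, one_mul] at hscaled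
  linarith

theorem le_rpow_two_thirds_of_rpow_three_halves_le {b c : ℝ} (hb : 0 ≤ b)
    (h : b ^ ((3 : ℝ) / 2) ≤ c) : b ≤ c ^ ((2 : ℝ) / 3) := by
  calc b = (b ^ ((3 : ℝ) / 2)) ^ ((2 : ℝ) / 3) := by rw [← rpow_mul hb]; norm_num
    _ ≤ c ^ ((2 : ℝ) / 3) := rpow_le_rpow (rpow_nonneg hb _) h (by norm_num)

theorem three_halves_mul_sqrt_sixteen_pi :
    3 / 2 * (16 * π) ^ ((1 : ℝ) / 2) = (36 * π) ^ ((1 : ℝ) / 2) := by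
  rw [← sqrt_eq_rpow, ← sqrt_eq_rpow, show 36 * π = (3 / 2) ^ 2 * (16 * π) by ring,
    sqrt_mul (by positivity : (0 : ℝ) ≤ (3 / 2) ^ 2), sqrt_sq (by norm_num)]

theorem hawking_mass_euclidean_bound_general (v₀ : ℝ) (hv₀ : 0 < v₀) (B m : ℝ → ℝ)
    (hB_cont : ContinuousOn B (Ioc 0 v₀))
    (hB_pos : ∀ v ∈ Ioc 0 v₀, 0 < B v)
    (hB_lim : Tendsto B (nhdsWithin 0 (Ioi 0)) (nhds 0))
    (hB_deriv : ∀ v ∈ Ioo 0 v₀, DifferentiableAt ℝ B v ∧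
      deriv B v ≤ (B v) ^ (-(1 : ℝ) / 2) *
        (16 * π - (16 * π) ^ ((3 : ℝ) / 2) * (B v) ^ (-(1 : ℝ) / 2) * m v) ^ ((1 : ℝ) / 2))
    (hm_nonneg : ∀ v ∈ Ioc 0 v₀, 0 ≤ m v) :
    B v₀ ≤ (36 * π) ^ ((1 : ℝ) / 3) * v₀ ^ ((2 : ℝ) / 3) := by
  have hderiv : ∀ v ∈ Ioo 0 v₀,
      deriv (fun y => B y ^ ((3 : ℝ) / 2)) v ≤ 3 / 2 * (16 * π) ^ ((1 : ℝ) / 2) := by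
    intro v hv
    have hv' : v ∈ Ioc 0 v₀ := Ioo_subset_Ioc_self hv
    have hBv := hB_pos v hv'
    have hmass : 0 ≤ (16 * π) ^ ((3 : ℝ) / 2) * (B v) ^ (-(1 : ℝ) / 2) * m v := by
      have := hm_nonneg v hv'
      positivity
    refine deriv_rpow_three_halves_le hBv (hB_deriv v hv).1 ((hB_deriv v hv).2.trans ?_)
    exact mul_le_mul_of_nonneg_left (rpow_one_half_le_rpow_one_half (by linarith))
      (rpow_nonneg hBv.le _)
  have hgrowth := sub_le_mul_sub_of_deriv_le_of_tendsto hv₀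
    (hB_cont.rpow_const fun _ _ => Or.inr (by norm_num))
    (fun v hv => ((hB_deriv v hv).1.rpow_const (Or.inr (by norm_num))).differentiableWithinAt)
    hderiv (hB_lim.rpow_const_nhds_zero (by norm_num))
  calc B v₀ ≤ ((36 * π) ^ ((1 : ℝ) / 2) * v₀) ^ ((2 : ℝ) / 3) := by
        refine le_rpow_two_thirds_of_rpow_three_halves_le (hB_pos v₀ ⟨hv₀, le_rfl⟩).le ?_
        rw [← three_halves_mul_sqrt_sixteen_pi]
        linarith
    _ = (36 * π) ^ ((1 : ℝ) / 3) * v₀ ^ ((2 : ℝ) / 3) := by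
        rw [mul_rpow (by positivity) hv₀.le, ← rpow_mul (by positivity)]
        norm_num

/-- Consequence of inequality (3.8): when the Hawking mass `m(v)` is nonnegative
along the flow, the Euclidean-type bound `B(v₀) ≤ (36π)^{1/3} v₀^{2/3}` holds. -/
theorem hawking_mass_euclidean_bound (v₀ : ℝ) (hv₀ : 0 < v₀) (B m : ℝ → ℝ)
    (hB_cont : ContinuousOn B (Ioc 0 v₀))
    (hB_pos : ∀ v ∈ Ioc 0 v₀, 0 < B v)
    (hB_lim : Tendsto B (nhdsWithin 0 (Ioi 0)) (nhds 0))
    (hm_cont : ContinuousOn m (Ioc 0 v₀))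
    (h_nonneg : ∀ v ∈ Ioc 0 v₀,
      0 ≤ 1 - (16 * π) ^ ((1 : ℝ) / 2) * (B v) ^ (-(1 : ℝ) / 2) * m v)
    (h_int : IntegrableOn
      (fun v => (1 - (16 * π) ^ ((1 : ℝ) / 2) * (B v) ^ (-(1 : ℝ) / 2) * m v) ^ ((1 : ℝ) / 2))
      (Ioo 0 v₀))
    (hB_deriv : ∀ v ∈ Ioo 0 v₀, DifferentiableAt ℝ B v ∧
      deriv B v ≤ (B v) ^ (-(1 : ℝ) / 2) *
        (16 * π - (16 * π) ^ ((3 : ℝ) / 2) * (B v) ^ (-(1 : ℝ) / 2) * m v) ^ ((1 : ℝ) / 2))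
    (hm_nonneg : ∀ v ∈ Ioc 0 v₀, 0 ≤ m v) :
    B v₀ ≤ (36 * π) ^ ((1 : ℝ) / 3) * v₀ ^ ((2 : ℝ) / 3) :=
  hawking_mass_euclidean_bound_general v₀ hv₀ B m hB_cont hB_pos hB_lim hB_deriv hm_nonneg
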